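/- Up to isomorphism, the unique minor-minimal non-split enhanced graph whose underlying graph is K_4 is the enhanced graph K_4(1) in which five of the six edges of K_4 are both contract-proof and delete-proof and the sixth edge is neither; its non-split 5-configuration consists of these five doubly protected edges. -/

import Mathlib

/-!  Common definitions: multigraphs, separations, width, minors,
Kirchhoff/Dodgson polynomials, Feynman 5-splitting, enhanced graphs. -/

noncomputable section

attribute [local instance] Classical.propDecidable

/-- A finite multigraph, given by finite vertex and edge types together with
source and target maps (an arbitrary orientation of each edge). -/
structure Multigraph : Type 1 where
  V : Type
  E : Type
  [fintypeV : Fintype V]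
  [fintypeE : Fintype E]
  src : E → V
  tgt : E → V

attribute [instance] Multigraph.fintypeV Multigraph.fintypeE

namespace Multigraph

variable (G : Multigraph)

/-- The endpoints of an edge as an unordered pair. -/
def ends (e : G.E) : Sym2 G.V := s(G.src e, G.tgt e)

/-- Incidence of a vertex with an edge. -/
def inc (v : G.V) (e : G.E) : Prop := v = G.src e ∨ v = G.tgt e

/-- `V(G_A)`: the vertices of the subgraph induced by an edge set `A`. -/
def edgeVerts (A : Set G.E) : Set G.V := {v | ∃ e ∈ A, G.inc v e}

/-- The order of the separation `(A, Aᶜ)` of the graph `G`,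
i.e. `|V(G_A) ∩ V(G_B)|` where `B = Aᶜ`. -/
def sepOrder (A : Set G.E) : ℕ := (G.edgeVerts A ∩ G.edgeVerts Aᶜ).ncard

/-- One step along an edge belonging to the edge set `A`. -/
def stepOn (A : Set G.E) (a b : G.V) : Prop :=
  ∃ e ∈ A, (G.src e = a ∧ G.tgt e = b) ∨ (G.src e = b ∧ G.tgt e = a)

/-- Reachability using only edges in `A`. -/
def reachOn (A : Set G.E) : G.V → G.V → Prop := Relation.ReflTransGen (G.stepOn A)

/-- Adjacency. -/
def Adj (a b : G.V) : Prop := G.stepOn Set.univ a b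

/-- One adjacency step staying inside the vertex set `U`. -/
def stepWithin (U : Set G.V) (a b : G.V) : Prop := a ∈ U ∧ b ∈ U ∧ G.Adj a b

/-- The subgraph induced by the vertex set `U` is (nonempty and) connected. -/
def ConnectedWithin (U : Set G.V) : Prop :=
  U.Nonempty ∧ ∀ a ∈ U, ∀ b ∈ U, Relation.ReflTransGen (G.stepWithin U) a b

/-- Connectivity of the multigraph. -/
def Connected : Prop := G.ConnectedWithin Set.univ

/-- A multigraph is simple if it has no loops and no parallel edges. -/
def Simple : Prop := (∀ e : G.E, G.src e ≠ G.tgt e) ∧ Function.Injective G.ends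

/-- 3-connectivity: at least 4 vertices, and removing fewer than 3 vertices
leaves a connected graph. -/
def ThreeConnected : Prop :=
  4 ≤ Fintype.card G.V ∧ ∀ S : Set G.V, S.ncard < 3 → G.ConnectedWithin Sᶜ

/-- The spanning subgraph with edge set `T` is connected. -/
def ConnectedOn (T : Set G.E) : Prop := ∀ a b : G.V, G.reachOn T a b

/-- The degree of `v` in the spanning subgraph with edge set `T`
(loops count twice). -/
def degOn (T : Set G.E) (v : G.V) : ℕ :=
  ({e ∈ T | G.src e = v}).ncard + ({e ∈ T | G.tgt e = v}).ncard

/-- The degree of a vertex (loops count twice). -/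
def degree (v : G.V) : ℕ := G.degOn Set.univ v

/-- An edge set is a forest (contains no cycle) iff every nonempty subset
has a vertex of degree exactly one. -/
def IsForest (T : Set G.E) : Prop :=
  ∀ T' ⊆ T, T'.Nonempty → ∃ v : G.V, G.degOn T' v = 1

/-- `T` is the edge set of a spanning tree of `G`. -/
def IsSpanningTree (T : Set G.E) : Prop := G.IsForest T ∧ G.ConnectedOn T

/-- The rank of an edge set in the cycle matroid `M(G)`:
the size of a largest forest contained in it. -/
def rk (A : Set G.E) : ℕ := sSup {n | ∃ T ⊆ A, G.IsForest T ∧ T.ncard = n}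

/-- The order of the separation `(A, Aᶜ)` in the cycle matroid `M(G)`,
namely `r(A) + r(Aᶜ) - r(E) + 1`. -/
def msepOrder (A : Set G.E) : ℕ := G.rk A + G.rk Aᶜ + 1 - G.rk Set.univ

/-- The number of connected components of `G_A`, the subgraph induced by the
edge set `A`. -/
def ncompOn (A : Set G.E) : ℕ :=
  ({C : Set G.V | ∃ v ∈ G.edgeVerts A, C = {w | G.reachOn A v w}}).ncard

/-- `G` has an edge ordering of width at most `k`: every prefix/suffix
separation has order at most `k`. -/
def WidthLE (k : ℕ) : Prop :=
  ∃ f : Fin (Fintype.card G.E) ≃ G.E,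
    ∀ ℓ : ℕ,
      G.sepOrder {e | ∃ i : Fin (Fintype.card G.E), f i = e ∧ (i : ℕ) < ℓ} ≤ k

/-- The width of `G`: the minimum width of an edge ordering. -/
def width : ℕ := sInf {k | G.WidthLE k}

/-- The minor of `G` obtained by deleting the edges in `D` and contracting the
edges in `C`. -/
def minorDC (D C : Set G.E) : Multigraph :=
  let rel : G.V → G.V → Prop := fun a b => ∃ e ∈ C, G.src e = a ∧ G.tgt e = b
  { V := Quot rel
    E := {e : G.E // e ∉ D ∪ C}
    fintypeV := @Fintype.ofFinite _ (Finite.of_surjective (Quot.mk rel) fun q => Quot.exists_rep q)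
    fintypeE := Fintype.ofFinite _
    src := fun e => Quot.mk rel (G.src e.1)
    tgt := fun e => Quot.mk rel (G.tgt e.1) }

/-- Deletion of a vertex (together with all incident edges). -/
def deleteVertex (v : G.V) : Multigraph :=
  { V := {w : G.V // w ≠ v}
    E := {e : G.E // ¬ G.inc v e}
    fintypeV := Fintype.ofFinite _
    fintypeE := Fintype.ofFinite _
    src := fun e => ⟨G.src e.1, fun h => e.2 (Or.inl h.symm)⟩
    tgt := fun e => ⟨G.tgt e.1, fun h => e.2 (Or.inr h.symm)⟩ }

/-- The edges having one endpoint in `X` and the other in `Y`. -/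
def crossEdges (X Y : Set G.V) : Set G.E :=
  {e | (G.src e ∈ X ∧ G.tgt e ∈ Y) ∨ (G.src e ∈ Y ∧ G.tgt e ∈ X)}

/-- `G` has `R` as a minor, via branch sets. -/
def HasMinor (R : Multigraph) : Prop :=
  ∃ X : R.V → Set G.V,
    (∀ v : R.V, G.ConnectedWithin (X v)) ∧
    (Pairwise fun v w => Disjoint (X v) (X w)) ∧
    ∀ v w : R.V, v ≠ w →
      ({f : R.E | R.ends f = s(v, w)}).ncard ≤ (G.crossEdges (X v) (X w)).ncard

/-- `D` is the edge set of a cycle of `G`. -/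
def IsCycleSet (D : Set G.E) : Prop :=
  D.Nonempty ∧ (∀ v ∈ G.edgeVerts D, G.degOn D v = 2) ∧
    ∀ a ∈ G.edgeVerts D, ∀ b ∈ G.edgeVerts D, G.reachOn D a b

/-- The side `A` of a separation on `X` is rich: for every `x ∈ X` there is a
cycle `D` avoiding `x` with at most one edge outside `A`. -/
def Rich (A : Set G.E) (X : Set G.V) : Prop :=
  ∀ x ∈ X, ∃ D : Set G.E, G.IsCycleSet D ∧ x ∉ G.edgeVerts D ∧ (D \ A).ncard ≤ 1

/-- The entry of the (edge × vertex) incidence matrix, as a polynomial. -/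
def incCol (e : G.E) (v : G.V) : MvPolynomial G.E ℤ :=
  (if G.src e = v then 1 else 0) - (if G.tgt e = v then 1 else 0)

/-- The expanded Kirchhoff matrix `M_G` (with the column of `v0` deleted). -/
def bigMatrix (v0 : G.V) :
    Matrix (G.E ⊕ {v : G.V // v ≠ v0}) (G.E ⊕ {v : G.V // v ≠ v0}) (MvPolynomial G.E ℤ) :=
  Matrix.of fun r c =>
    match r, c with
    | Sum.inl e, Sum.inl f => if e = f then MvPolynomial.X e else 0
    | Sum.inl e, Sum.inr v => G.incCol e v.1
    | Sum.inr v, Sum.inl e => - G.incCol e v.1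
    | Sum.inr _, Sum.inr _ => 0

/-- The Dodgson polynomial `Ψ^{I,J}_K`: delete the rows indexed by `I` and the
columns indexed by `J` from `M_G`, take the determinant, and set `x_e = 0`
for `e ∈ K`.  (It is well defined up to an overall sign.) -/
def dodgson (v0 : G.V) (I J K : Set G.E) : MvPolynomial G.E ℤ :=
  if h : Nonempty ({e : G.E // e ∉ I} ≃ {e : G.E // e ∉ J}) then
    MvPolynomial.aeval (fun e => if e ∈ K then (0 : MvPolynomial G.E ℤ) else MvPolynomial.X e)
      (Matrix.det (Matrix.of fun r c =>
        G.bigMatrix v0 (Sum.map Subtype.val id r) (Sum.map (fun x => (h.some x).1) id c)))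
  else 0

/-- `(I,J,K)` is one of the 30 Dodgson configurations associated with the
5-configuration `S`. -/
def DodgsonConfig (S I J K : Set G.E) : Prop :=
  I ∪ J ∪ K = S ∧
    ((I.ncard = 2 ∧ J.ncard = 2 ∧ K.ncard = 1 ∧ I ∩ J = ∅ ∧ I ∩ K = ∅ ∧ J ∩ K = ∅) ∨
      (I.ncard = 3 ∧ J.ncard = 3 ∧ K = ∅ ∧ (I ∩ J).ncard = 1))

/-- The 5-configuration `S` splits: one of its 30 associated Dodgson
polynomials is identically zero. -/
def ConfigSplits (S : Set G.E) : Prop :=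
  ∃ I J K : Set G.E, G.DodgsonConfig S I J K ∧ ∀ v0 : G.V, G.dodgson v0 I J K = 0

/-- `G` is Feynman 5-split: every 5-configuration splits. -/
def FeynmanSplit : Prop := ∀ S : Set G.E, S.ncard = 5 → G.ConfigSplits S

/-- `(U, F)` is a subgraph of `G` (every edge of `F` has both ends in `U`). -/
def IsSubgraphPair (U : Set G.V) (F : Set G.E) : Prop :=
  ∀ e ∈ F, G.src e ∈ U ∧ G.tgt e ∈ U

/-- `G` decomposes into edge-disjoint subgraphs `G₁ ∪ G₂ = G` with
`|V(G₁) ∩ V(G₂)| ≤ 2` and `|E(G₁) ∩ S| = 2`, or with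
`|V(G₁) ∩ V(G₂)| = 1` and `|E(G₁) ∩ S| = 1`. -/
def splitWitness (S : Set G.E) : Prop :=
  ∃ (U1 U2 : Set G.V) (F1 F2 : Set G.E),
    G.IsSubgraphPair U1 F1 ∧ G.IsSubgraphPair U2 F2 ∧
    Disjoint F1 F2 ∧ U1 ∪ U2 = Set.univ ∧ F1 ∪ F2 = Set.univ ∧
    (((U1 ∩ U2).ncard ≤ 2 ∧ (F1 ∩ S).ncard = 2) ∨
      ((U1 ∩ U2).ncard = 1 ∧ (F1 ∩ S).ncard = 1))

/-- A separation of order at most 1 with edges of `S` on both sides, or a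
("bad") 2-separation with `min{|A ∩ S|, |B ∩ S|} = 2`. -/
def badSplitSep (S : Set G.E) : Prop :=
  ∃ A : Set G.E,
    (G.sepOrder A ≤ 1 ∧ (A ∩ S).Nonempty ∧ (Aᶜ ∩ S).Nonempty) ∨
      (G.sepOrder A = 2 ∧ min (A ∩ S).ncard (Aᶜ ∩ S).ncard = 2)

/-- Isomorphism of multigraphs. -/
def IsoTo (G' : Multigraph) : Prop :=
  ∃ (α : G.V ≃ G'.V) (β : G.E ≃ G'.E),
    ∀ e : G.E, G'.ends (β e) = Sym2.map α (G.ends e)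

/-- `G` is a tree. -/
def IsTree : Prop := G.Connected ∧ G.IsForest Set.univ

/-- Every vertex has degree 1 or 3. -/
def IsCubic : Prop := ∀ v : G.V, G.degree v = 1 ∨ G.degree v = 3

/-- A leaf. -/
def IsLeaf (v : G.V) : Prop := G.degree v = 1

/-- A cubic caterpillar: a cubic tree whose non-leaf vertices induce a path. -/
def IsCubicCaterpillar : Prop :=
  G.IsTree ∧ G.IsCubic ∧
    (∀ a ∈ {v : G.V | ¬ G.IsLeaf v}, ∀ b ∈ {v : G.V | ¬ G.IsLeaf v},
      Relation.ReflTransGen (G.stepWithin {v : G.V | ¬ G.IsLeaf v}) a b) ∧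
    ∀ v : G.V, ¬ G.IsLeaf v →
      ({e : G.E | G.inc v e ∧ ∃ w : G.V, ¬ G.IsLeaf w ∧ G.inc w e ∧ w ≠ v}).ncard ≤ 2

/-- The branch decomposition `(T, φ)` of the cycle matroid `M(G)` has width at
most `k`: removing any edge `f` of `T` gives a separation of the ground set
of matroid order at most `k`. -/
def branchWidthLE (T : Multigraph) (φ : G.E → T.V) (k : ℕ) : Prop :=
  ∀ f : T.E,
    G.msepOrder {e : G.E | φ e ∈ {x : T.V | T.reachOn {f}ᶜ (T.src f) x}} ≤ k

/-- `(T, φ)` is a branch decomposition of `M(G)` over a cubic caterpillar. -/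
def IsCatDecomp (T : Multigraph) (φ : G.E → T.V) : Prop :=
  T.IsCubicCaterpillar ∧ Function.Injective φ ∧ ∀ e : G.E, T.IsLeaf (φ e)

/-- The caterpillar width of the cycle matroid `M(G)`. -/
def catWidth : ℕ :=
  sInf {k | ∃ (T : Multigraph) (φ : G.E → T.V), G.IsCatDecomp T φ ∧ G.branchWidthLE T φ k}

end Multigraph

/-! ### Concrete graphs -/

/-- The complete graph `K₅`. -/
def K5m : Multigraph where
  V := Fin 5
  E := {p : Fin 5 × Fin 5 // p.1 < p.2}
  src := fun e => e.1.1
  tgt := fun e => e.1.2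

/-- The complete bipartite graph `K₃,₃`. -/
def K33m : Multigraph where
  V := Fin 3 ⊕ Fin 3
  E := Fin 3 × Fin 3
  src := fun e => Sum.inl e.1
  tgt := fun e => Sum.inr e.2

/-- The cube (3-dimensional hypercube) graph `C`. -/
def cubeM : Multigraph where
  V := Fin 2 × Fin 2 × Fin 2
  E := Fin 3 × Fin 2 × Fin 2
  src := fun e =>
    if e.1 = 0 then (0, e.2.1, e.2.2) else if e.1 = 1 then (e.2.1, 0, e.2.2)
      else (e.2.1, e.2.2, 0)
  tgt := fun e =>
    if e.1 = 0 then (1, e.2.1, e.2.2) else if e.1 = 1 then (e.2.1, 1, e.2.2)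
      else (e.2.1, e.2.2, 1)

/-- The octahedron graph `O = K₂,₂,₂`. -/
def octaM : Multigraph where
  V := Fin 3 × Fin 2
  E := {p : (Fin 3 × Fin 2) × (Fin 3 × Fin 2) // p.1.1 < p.2.1}
  src := fun e => e.1.1
  tgt := fun e => e.1.2

/-- The edges of the graph `H` (the cube after a Y–Δ transformation at one
vertex): vertices `0,1,2` form the new triangle, `6` is the antipodal vertex. -/
def hEdgeList : List (Fin 7 × Fin 7) :=
  [(0,1), (0,2), (1,2), (0,3), (0,4), (1,3), (1,5), (2,4), (2,5), (3,6), (4,6), (5,6)]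

/-- The graph `H`, one Δ–Y away from each of the cube and the octahedron. -/
def Hm : Multigraph where
  V := Fin 7
  E := {p : Fin 7 × Fin 7 // p ∈ hEdgeList}
  src := fun e => e.1.1
  tgt := fun e => e.1.2

/-- The complete graph `K₄`. -/
def K4m : Multigraph where
  V := Fin 4
  E := {p : Fin 4 × Fin 4 // p.1 < p.2}
  src := fun e => e.1.1
  tgt := fun e => e.1.2

/-- `K₅⁻`, the complete graph on 5 vertices minus the edge `{3,4}`. -/
def K5minusM : Multigraph where
  V := Fin 5
  E := {p : Fin 5 × Fin 5 // p.1 < p.2 ∧ ¬(p.1 = 3 ∧ p.2 = 4)}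
  src := fun e => e.1.1
  tgt := fun e => e.1.2

/-- The wheel `W_k`: centre `none`; rim edges `Sum.inl i` join `some i` to
`some (i+1)`, spoke edges `Sum.inr i` join the centre to `some i`. -/
def wheelM (k : ℕ) : Multigraph where
  V := Option (Fin k)
  E := Fin k ⊕ Fin k
  src := Sum.elim (fun i => some i) (fun _ => none)
  tgt := Sum.elim (fun i => some (finRotate k i)) (fun i => some i)

/-! ### Enhanced graphs -/

/-- An enhanced graph: a graph together with sets of contract-proof and
delete-proof edges. -/
structure EGraph : Type 1 where
  G : Multigraph
  Cp : Set G.E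
  Dp : Set G.E

namespace EGraph

/-- The 5-configuration `S` of an enhanced graph splits. -/
def Splits (H : EGraph) (S : Set H.G.E) : Prop :=
  H.G.badSplitSep S ∨
    (∃ f ∈ S \ H.Dp, (H.G.minorDC {f} ∅).badSplitSep {e | e.1 ∈ S}) ∨
    (∃ f ∈ S \ H.Cp, (H.G.minorDC ∅ {f}).badSplitSep {e | e.1 ∈ S})

/-- An enhanced graph is non-split if it has a non-split 5-configuration. -/
def NonSplit (H : EGraph) : Prop := ∃ S : Set H.G.E, S.ncard = 5 ∧ ¬ H.Splits S

/-- Deletion of an edge. -/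
def delE (H : EGraph) (f : H.G.E) : EGraph :=
  ⟨H.G.minorDC {f} ∅, {e | e.1 ∈ H.Cp}, {e | e.1 ∈ H.Dp}⟩

/-- Contraction of an edge. -/
def conE (H : EGraph) (f : H.G.E) : EGraph :=
  ⟨H.G.minorDC ∅ {f}, {e | e.1 ∈ H.Cp}, {e | e.1 ∈ H.Dp}⟩

/-- Deletion of a vertex. -/
def delV (H : EGraph) (v : H.G.V) : EGraph :=
  ⟨H.G.deleteVertex v, {e | e.1 ∈ H.Cp}, {e | e.1 ∈ H.Dp}⟩

/-- Remove an edge from the contract-proof set. -/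
def unprotC (H : EGraph) (f : H.G.E) : EGraph := ⟨H.G, H.Cp \ {f}, H.Dp⟩

/-- Remove an edge from the delete-proof set. -/
def unprotD (H : EGraph) (f : H.G.E) : EGraph := ⟨H.G, H.Cp, H.Dp \ {f}⟩

/-- Delete `f'` of a parallel pair `f, f'` and make `f` delete-proof. -/
def parallelReduce (H : EGraph) (f f' : H.G.E) : EGraph :=
  ⟨H.G.minorDC {f'} ∅, {e | e.1 ∈ H.Cp}, {e | e.1 ∈ H.Dp ∨ e.1 = f}⟩

/-- Contract `f'` of the two edges `f, f'` at a degree-two vertex and make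
`f` contract-proof. -/
def seriesReduce (H : EGraph) (f f' : H.G.E) : EGraph :=
  ⟨H.G.minorDC ∅ {f'}, {e | e.1 ∈ H.Cp ∨ e.1 = f}, {e | e.1 ∈ H.Dp}⟩

/-- One step of the enhanced-graph minor relation. -/
inductive MinorStep : EGraph → EGraph → Prop
  | delV (H : EGraph) (v : H.G.V) : MinorStep H (H.delV v)
  | delE (H : EGraph) (f : H.G.E) : MinorStep H (H.delE f)
  | conE (H : EGraph) (f : H.G.E) : MinorStep H (H.conE f)
  | unprotC (H : EGraph) (f : H.G.E) (hf : f ∈ H.Cp) : MinorStep H (H.unprotC f)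
  | unprotD (H : EGraph) (f : H.G.E) (hf : f ∈ H.Dp) : MinorStep H (H.unprotD f)
  | parallel (H : EGraph) (f f' : H.G.E) (hne : f ≠ f')
      (hpar : H.G.ends f = H.G.ends f') : MinorStep H (H.parallelReduce f f')
  | series (H : EGraph) (f f' : H.G.E) (v : H.G.V) (hne : f ≠ f')
      (hf : H.G.inc v f) (hf' : H.G.inc v f')
      (hdeg : ∀ e : H.G.E, H.G.inc v e → e = f ∨ e = f') :
      MinorStep H (H.seriesReduce f f')

/-- Minor-minimal non-split enhanced graph: non-split, but every proper
enhanced minor is split. -/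
def MinorMinimalNonSplit (H : EGraph) : Prop :=
  H.NonSplit ∧ ∀ H' : EGraph, Relation.TransGen MinorStep H H' → ¬ H'.NonSplit

/-- Isomorphism of enhanced graphs. -/
def IsoTo (H H' : EGraph) : Prop :=
  ∃ (α : H.G.V ≃ H'.G.V) (β : H.G.E ≃ H'.G.E),
    (∀ e : H.G.E, H'.G.ends (β e) = Sym2.map α (H.G.ends e)) ∧
    (∀ e : H.G.E, β e ∈ H'.Cp ↔ e ∈ H.Cp) ∧
    (∀ e : H.G.E, β e ∈ H'.Dp ↔ e ∈ H.Dp)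

end EGraph

/-- The edge `01` of `K₄`. -/
def e01K4 : K4m.E := ⟨(0, 1), by decide⟩

/-- The enhanced graph `K₄(1)`: all edges of `K₄` except one are both
contract-proof and delete-proof. -/
def K4one : EGraph := ⟨K4m, {e | e ≠ e01K4}, {e | e ≠ e01K4}⟩

/-! `K₄(1)` is non-split because `K₄` has no bad separation for its five protected edges and none
of them may be deleted or contracted. Its proper minors split. A graph with five edges has a loop,
a pendant edge, a parallel pair or a vertex of degree two (a simple graph whose non-isolated
vertices have degree at least three has six edges), which gives a bad separation. Once a
protection of `K₄(1)` is dropped, some edge of any 5-configuration may be deleted or contracted,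
and then two disjoint series pairs (in `K₄ ∖ e`) or parallel pairs (in `K₄ / e`) are each cut off
by two vertices; the edge outside the configuration misses one of them. The same argument forces
the five configuration edges of a minor-minimal non-split `K₄` to be doubly protected, and
minimality forbids any further protection. -/

-- `decide` below needs the computable instances, not the local `Classical.propDecidable`.
attribute [-instance] Classical.propDecidable

namespace Set

lemma two_le_ncard_inter_of_subsingleton_compl {α : Type*} [Finite α] {A T : Set α}
    (hT : Tᶜ.Subsingleton) {x y z : α} (hxy : x ≠ y) (hxz : x ≠ z) (hyz : y ≠ z)
    (hx : x ∈ A) (hy : y ∈ A) (hz : z ∈ A) : 2 ≤ (A ∩ T).ncard := by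
  have key : ∃ a ∈ A ∩ T, ∃ b ∈ A ∩ T, a ≠ b := by
    by_cases hxT : x ∈ T
    · by_cases hyT : y ∈ T
      · exact ⟨x, ⟨hx, hxT⟩, y, ⟨hy, hyT⟩, hxy⟩
      · exact ⟨x, ⟨hx, hxT⟩, z, ⟨hz, by_contra fun hzT => hyz (hT hyT hzT)⟩, hxz⟩
    · exact ⟨y, ⟨hy, by_contra fun hyT => hxy (hT hxT hyT)⟩,
        z, ⟨hz, by_contra fun hzT => hxz (hT hxT hzT)⟩, hyz⟩
  exact (one_lt_ncard_iff).2 (by grind)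

lemma exists_compl_eq_singleton {α : Type*} [Finite α] {S : Set α}
    (hS : S.ncard + 1 = Nat.card α) : ∃ m, Sᶜ = {m} :=
  ncard_eq_one.1 (by rw [ncard_compl]; omega)

end Set

namespace Multigraph

variable {G G' G'' : Multigraph}

lemma inc_iff_mem_ends {v : G.V} {e : G.E} : G.inc v e ↔ v ∈ G.ends e := by
  simp [inc, ends, Sym2.mem_iff]

lemma edgeVerts_singleton (e : G.E) : G.edgeVerts {e} = {G.src e, G.tgt e} := by
  ext v
  simp [edgeVerts, inc]

lemma edgeVerts_union (A B : Set G.E) :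
    G.edgeVerts (A ∪ B) = G.edgeVerts A ∪ G.edgeVerts B := by
  ext v
  simp only [edgeVerts, Set.mem_union, Set.mem_ofPred_eq]
  grind

lemma edgeVerts_pair (e f : G.E) : G.edgeVerts {e, f} = G.edgeVerts {e} ∪ G.edgeVerts {f} :=
  edgeVerts_union {e} {f}

lemma ncard_edgeVerts_singleton_le (e : G.E) : (G.edgeVerts {e}).ncard ≤ 2 := by
  rw [edgeVerts_singleton]
  exact (Set.ncard_insert_le _ _).trans (by rw [Set.ncard_singleton])

lemma ncard_edgeVerts_singleton_sdiff_le {v : G.V} {e : G.E} (hv : G.inc v e) :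
    (G.edgeVerts {e} \ {v}).ncard ≤ 1 := by
  have hmem : v ∈ G.edgeVerts {e} := ⟨e, rfl, hv⟩
  rw [Set.ncard_sdiff_singleton_of_mem hmem]
  have := ncard_edgeVerts_singleton_le e
  omega

lemma sepOrder_le_ncard_edgeVerts (A : Set G.E) : G.sepOrder A ≤ (G.edgeVerts A).ncard :=
  Set.ncard_le_ncard Set.inter_subset_left

lemma sepOrder_le_ncard_edgeVerts_sdiff {A : Set G.E} {v : G.V} (hv : ∀ e, G.inc v e → e ∈ A) :
    G.sepOrder A ≤ (G.edgeVerts A \ {v}).ncard := by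
  refine Set.ncard_le_ncard ?_
  rintro u ⟨hu, e, he, hue⟩
  exact ⟨hu, fun huv => he (hv e (huv ▸ hue))⟩

lemma sepOrder_singleton_le_one_of_loop {e : G.E} (he : G.src e = G.tgt e) :
    G.sepOrder {e} ≤ 1 :=
  (sepOrder_le_ncard_edgeVerts _).trans (by simp [edgeVerts_singleton, he])

lemma sepOrder_singleton_le_one_of_pendant {v : G.V} {e : G.E} (he : G.inc v e)
    (hv : ∀ f, G.inc v f → f = e) : G.sepOrder {e} ≤ 1 :=
  (sepOrder_le_ncard_edgeVerts_sdiff hv).trans (ncard_edgeVerts_singleton_sdiff_le he)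

lemma sepOrder_pair_le_two_of_parallel {e f : G.E} (hef : G.ends e = G.ends f) :
    G.sepOrder {e, f} ≤ 2 := by
  have : G.edgeVerts {f} = G.edgeVerts {e} := by
    ext v
    simp only [edgeVerts, Set.mem_singleton_iff, exists_eq_left, Set.mem_ofPred_eq,
      inc_iff_mem_ends, hef]
  refine (sepOrder_le_ncard_edgeVerts _).trans ?_
  rw [edgeVerts_pair, this, Set.union_self]
  exact ncard_edgeVerts_singleton_le e

lemma sepOrder_pair_le_two_of_series {v : G.V} {e f : G.E} (he : G.inc v e) (hf : G.inc v f)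
    (hv : ∀ g, G.inc v g → g = e ∨ g = f) : G.sepOrder {e, f} ≤ 2 := by
  refine (sepOrder_le_ncard_edgeVerts_sdiff (A := {e, f}) hv).trans ?_
  rw [edgeVerts_pair, Set.union_sdiff_distrib]
  exact (Set.ncard_union_le _ _).trans
    (add_le_add (ncard_edgeVerts_singleton_sdiff_le he) (ncard_edgeVerts_singleton_sdiff_le hf))

lemma badSplitSep_of_sepOrder_le_two {A S : Set G.E} (hA : G.sepOrder A ≤ 2)
    (hin : (A ∩ S).ncard = 2) (hout : 2 ≤ (Aᶜ ∩ S).ncard) : G.badSplitSep S := by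
  refine ⟨A, ?_⟩
  rcases Nat.lt_or_ge (G.sepOrder A) 2 with h | h
  · exact Or.inl ⟨by omega, Set.nonempty_of_ncard_ne_zero (by omega),
      Set.nonempty_of_ncard_ne_zero (by omega)⟩
  · exact Or.inr ⟨by omega, by rw [hin, min_eq_left hout]⟩

lemma badSplitSep_of_pair_subset {p₁ p₂ x y z : G.E} {T : Set G.E} (hT : Tᶜ.Subsingleton)
    (hsep : G.sepOrder {p₁, p₂} ≤ 2) (hp : p₁ ≠ p₂) (h₁ : p₁ ∈ T) (h₂ : p₂ ∈ T)
    (hxy : x ≠ y) (hxz : x ≠ z) (hyz : y ≠ z)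
    (hx : x ∉ ({p₁, p₂} : Set G.E)) (hy : y ∉ ({p₁, p₂} : Set G.E))
    (hz : z ∉ ({p₁, p₂} : Set G.E)) : G.badSplitSep T := by
  refine badSplitSep_of_sepOrder_le_two hsep ?_
    (Set.two_le_ncard_inter_of_subsingleton_compl hT hxy hxz hyz hx hy hz)
  rw [Set.inter_eq_left.2 (Set.pair_subset h₁ h₂), Set.ncard_pair hp]

/-- The edge missing from `T` lies outside one of the two pairs. -/
lemma badSplitSep_of_two_pairs {p₁ p₂ q₁ q₂ r : G.E} (hnd : [p₁, p₂, q₁, q₂, r].Nodup)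
    (hp : G.sepOrder {p₁, p₂} ≤ 2) (hq : G.sepOrder {q₁, q₂} ≤ 2) {T : Set G.E}
    (hT : Tᶜ.Subsingleton) : G.badSplitSep T := by
  simp only [List.nodup_cons, List.mem_cons, List.not_mem_nil, or_false, not_or, not_false_eq_true,
    List.nodup_nil, and_true] at hnd
  obtain ⟨⟨h12, h13, h14, h15⟩, ⟨h23, h24, h25⟩, ⟨h34, h35⟩, h45⟩ := hnd
  by_cases hpT : p₁ ∈ T ∧ p₂ ∈ T
  · exact badSplitSep_of_pair_subset hT hp h12 hpT.1 hpT.2 h34 h35 h45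
      (by simp [Ne.symm h13, Ne.symm h23]) (by simp [Ne.symm h14, Ne.symm h24])
      (by simp [Ne.symm h15, Ne.symm h25])
  · obtain ⟨p, hpT', hp'⟩ : ∃ p ∉ T, p = p₁ ∨ p = p₂ := by grind
    have hmem : ∀ e, e ≠ p → e ∈ T := fun e he => by_contra fun heT => he (hT heT hpT')
    exact badSplitSep_of_pair_subset hT hq h34 (hmem _ (by grind)) (hmem _ (by grind)) h12 h15
      h25 (by simp [h13, h14]) (by simp [h23, h24]) (by simp [Ne.symm h35, Ne.symm h45])

lemma sum_ncard_inc_le : ∑ v, {e | G.inc v e}.ncard ≤ 2 * Nat.card G.E := by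
  classical
  calc ∑ v, {e | G.inc v e}.ncard = ∑ v, (Finset.univ.bipartiteAbove G.inc v).card := by
        refine Finset.sum_congr rfl fun v _ => ?_
        rw [Set.ncard_eq_toFinset_card']
        simp [Finset.bipartiteAbove]
    _ = ∑ e, (Finset.univ.bipartiteBelow G.inc e).card :=
        Finset.sum_card_bipartiteAbove_eq_sum_card_bipartiteBelow _
    _ ≤ ∑ _e : G.E, 2 := Finset.sum_le_sum fun e _ => by
        refine (Finset.card_le_card (t := {G.src e, G.tgt e}) ?_).trans Finset.card_le_two
        intro v hv
        rcases (Finset.mem_filter.1 hv).2 with h | h <;> simp [h]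
    _ = 2 * Nat.card G.E := by simp [Nat.card_eq_fintype_card, mul_comm]

lemma Simple.exists_ends_eq_of_inc (hG : G.Simple) {u : G.V} {e : G.E} (he : G.inc u e) :
    ∃ x, x ≠ u ∧ G.inc x e ∧ G.ends e = s(u, x) := by
  obtain ⟨x, hx⟩ := Sym2.mem_iff_exists.1 (inc_iff_mem_ends.1 he)
  refine ⟨x, fun hxu => hG.1 e ?_, inc_iff_mem_ends.2 (hx ▸ Sym2.mem_mk_right u x), hx⟩
  rw [ends, hxu, Sym2.eq_iff] at hx
  grind

/-- An end `u` of an edge and its three neighbours have total degree at least `12`, while all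
degrees sum to at most twice the number of edges. -/
lemma Simple.six_le_card_E (hG : G.Simple)
    (hdeg : ∀ v e, G.inc v e → 3 ≤ {f | G.inc v f}.ncard) (e₀ : G.E) : 6 ≤ Nat.card G.E := by
  classical
  set u := G.src e₀
  obtain ⟨e₁, e₂, e₃, h₁, h₂, h₃, h12, h13, h23⟩ :=
    (Set.two_lt_ncard_iff).1 (hdeg u e₀ (Or.inl rfl))
  obtain ⟨x₁, hx₁, hi₁, he₁⟩ := hG.exists_ends_eq_of_inc h₁
  obtain ⟨x₂, hx₂, hi₂, he₂⟩ := hG.exists_ends_eq_of_inc h₂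
  obtain ⟨x₃, hx₃, hi₃, he₃⟩ := hG.exists_ends_eq_of_inc h₃
  have hne : ∀ {e f : G.E} {x y : G.V}, e ≠ f → G.ends e = s(u, x) → G.ends f = s(u, y) →
      x ≠ y := fun hef hx hy hxy => hef (hG.2 (by rw [hx, hy, hxy]))
  have hcard : ({u, x₁, x₂, x₃} : Finset G.V).card = 4 := by
    rw [Finset.card_insert_of_notMem (by simp [hx₁.symm, hx₂.symm, hx₃.symm]),
      Finset.card_insert_of_notMem (by simp [hne h12 he₁ he₂, hne h13 he₁ he₃]),
      Finset.card_pair (hne h23 he₂ he₃)]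
  have hsum : 12 ≤ ∑ v, {e | G.inc v e}.ncard := calc
    12 = ∑ _v ∈ ({u, x₁, x₂, x₃} : Finset G.V), 3 := by simp [hcard]
    _ ≤ ∑ v ∈ ({u, x₁, x₂, x₃} : Finset G.V), {e | G.inc v e}.ncard := by
      refine Finset.sum_le_sum fun v hv => ?_
      simp only [Finset.mem_insert, Finset.mem_singleton] at hv
      rcases hv with rfl | rfl | rfl | rfl
      exacts [hdeg _ _ h₁, hdeg _ _ hi₁, hdeg _ _ hi₂, hdeg _ _ hi₃]
    _ ≤ ∑ v, {e | G.inc v e}.ncard :=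
      Finset.sum_le_sum_of_subset (Finset.subset_univ _)
  have := sum_ncard_inc_le (G := G)
  omega

/-- A loop, pendant edge, parallel pair or vertex of degree two gives a bad separation; without
them the graph is simple with all degrees `0` or at least `3`, hence has at least six edges. -/
theorem badSplitSep_univ_of_card_eq_five (h5 : Nat.card G.E = 5) : G.badSplitSep Set.univ := by
  by_contra hbad
  have hcompl : ∀ A : Set G.E, A.ncard + Aᶜ.ncard = 5 := fun A => by
    rw [Set.ncard_add_ncard_compl, h5]
  have hsingle : ∀ e, ¬ G.sepOrder {e} ≤ 1 := fun e h => by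
    have := hcompl {e}
    rw [Set.ncard_singleton] at this
    exact hbad ⟨{e}, Or.inl ⟨h, by simp, by
      rw [Set.inter_univ]; exact Set.nonempty_of_ncard_ne_zero (by omega)⟩⟩
  have hpair : ∀ e f, e ≠ f → ¬ G.sepOrder {e, f} ≤ 2 := fun e f hef h => by
    have := hcompl {e, f}
    rw [Set.ncard_pair hef] at this
    exact hbad (badSplitSep_of_sepOrder_le_two h (by rw [Set.inter_univ, Set.ncard_pair hef])
      (by rw [Set.inter_univ]; omega))
  have hsimple : G.Simple := ⟨fun e h => hsingle e (sepOrder_singleton_le_one_of_loop h),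
    fun e f h => by_contra fun hef => hpair e f hef (sepOrder_pair_le_two_of_parallel h)⟩
  have hdeg : ∀ v e, G.inc v e → 3 ≤ {f | G.inc v f}.ncard := by
    intro v e he
    by_contra hlt
    have hle : ({f | G.inc v f} \ {e}).ncard ≤ 1 := by
      rw [Set.ncard_sdiff_singleton_of_mem (s := {f | G.inc v f}) he]
      omega
    rcases (Set.ncard_le_one_iff_eq).1 hle with h | ⟨f, hf⟩
    · refine hsingle e (sepOrder_singleton_le_one_of_pendant he fun g hg => ?_)
      exact Set.sdiff_eq_empty.1 h hg
    · have hfv : f ∈ {f | G.inc v f} \ {e} := hf ▸ rfl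
      refine hpair e f (Ne.symm hfv.2) (sepOrder_pair_le_two_of_series he hfv.1 fun g hg => ?_)
      by_cases hge : g = e
      · exact Or.inl hge
      · exact Or.inr (hf ▸ ⟨hg, hge⟩ : g ∈ ({f} : Set G.E))
  obtain ⟨e₀⟩ : Nonempty G.E := Nat.card_pos_iff.1 (by omega) |>.1
  have := hsimple.six_le_card_E hdeg e₀
  omega

def minorVert (D C : Set G.E) (v : G.V) : (G.minorDC D C).V := Quot.mk _ v

lemma minorDC_ends {D C : Set G.E} (x : (G.minorDC D C).E) :
    (G.minorDC D C).ends x = Sym2.map (G.minorVert D C) (G.ends x.1) := rfl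

lemma minorVert_eq_of_ends_eq {D C : Set G.E} {g : G.E} (hg : g ∈ C) {a b : G.V}
    (hab : G.ends g = s(a, b)) : G.minorVert D C a = G.minorVert D C b := by
  rcases Sym2.eq_iff.1 hab with ⟨rfl, rfl⟩ | ⟨rfl, rfl⟩
  · exact Quot.sound ⟨g, hg, rfl, rfl⟩
  · exact (Quot.sound ⟨g, hg, rfl, rfl⟩).symm

lemma minorDC_ends_eq_of_triangle {D C : Set G.E} {g : G.E} (hg : g ∈ C) {a b w : G.V}
    (hab : G.ends g = s(a, b)) {x y : (G.minorDC D C).E} (hx : G.ends x.1 = s(a, w))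
    (hy : G.ends y.1 = s(b, w)) : (G.minorDC D C).ends x = (G.minorDC D C).ends y := by
  rw [minorDC_ends, minorDC_ends, hx, hy, Sym2.map_mk, Sym2.map_mk,
    minorVert_eq_of_ends_eq hg hab]

lemma minorVert_injective (D : Set G.E) : Function.Injective (G.minorVert D ∅) := fun _ _ h =>
  congrArg (Quot.lift id fun _ _ ⟨_, he, _⟩ => he.elim) h

lemma minorDC_inc_minorVert_iff {D : Set G.E} {v : G.V} {x : (G.minorDC D ∅).E} :
    (G.minorDC D ∅).inc (G.minorVert D ∅ v) x ↔ G.inc v x.1 :=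
  or_congr (minorVert_injective D).eq_iff (minorVert_injective D).eq_iff

lemma edgeVerts_coe_finset [DecidableEq G.V] (A : Finset G.E) :
    G.edgeVerts ↑A = ↑(A.biUnion fun e => {G.src e, G.tgt e}) := by
  ext v
  simp [edgeVerts, inc]

lemma sepOrder_coe_finset [DecidableEq G.V] [DecidableEq G.E] (A : Finset G.E) :
    G.sepOrder ↑A =
      (A.biUnion (fun e => {G.src e, G.tgt e}) ∩ Aᶜ.biUnion fun e => {G.src e, G.tgt e}).card := by
  rw [sepOrder, ← Finset.coe_compl, edgeVerts_coe_finset, edgeVerts_coe_finset,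
    ← Finset.coe_inter, Set.ncard_coe_finset]

def IsIso (α : G.V ≃ G'.V) (β : G.E ≃ G'.E) : Prop :=
  ∀ e, G'.ends (β e) = Sym2.map α (G.ends e)

namespace IsIso

lemma refl (G : Multigraph) : IsIso (Equiv.refl G.V) (Equiv.refl G.E) := fun e =>
  (congrFun Sym2.map_id (G.ends e)).symm

variable {α : G.V ≃ G'.V} {β : G.E ≃ G'.E}

lemma trans (h : IsIso α β) {α' : G'.V ≃ G''.V} {β' : G'.E ≃ G''.E} (h' : IsIso α' β') :
    IsIso (α.trans α') (β.trans β') := fun e => by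
  rw [Equiv.trans_apply, h', h, Sym2.map_map]
  rfl

lemma ends_symm_apply (h : IsIso α β) (e : G'.E) :
    G.ends (β.symm e) = Sym2.map α.symm (G'.ends e) := by
  rw [← β.apply_symm_apply e, h, Sym2.map_map, α.symm_comp_self, Sym2.map_id, id,
    β.apply_symm_apply]

lemma inc_iff (h : IsIso α β) {v : G.V} {e : G.E} : G'.inc (α v) (β e) ↔ G.inc v e := by
  rw [inc_iff_mem_ends, inc_iff_mem_ends, h, Sym2.mem_map]
  exact ⟨fun ⟨a, ha, hav⟩ => α.injective hav ▸ ha, fun hv => ⟨v, hv, rfl⟩⟩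

end IsIso

end Multigraph

instance : DecidableEq K4m.V := inferInstanceAs (DecidableEq (Fin 4))

instance : DecidableEq K4m.E := inferInstanceAs (DecidableEq {p : Fin 4 × Fin 4 // p.1 < p.2})

instance (v : Fin 4) (e : K4m.E) : Decidable (K4m.inc v e) :=
  inferInstanceAs (Decidable (v = e.1.1 ∨ v = e.1.2))

namespace K4m

open Multigraph

def edge (a b : Fin 4) (h : a < b := by decide) : K4m.E := ⟨(a, b), h⟩

lemma ends_injective : Function.Injective K4m.ends := by
  unfold Function.Injective; decide

lemma nat_card_E : Nat.card K4m.E = 6 := by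
  rw [Nat.card_eq_fintype_card]; rfl

lemma eq_of_inc_zero : ∀ k, K4m.inc (0 : Fin 4) k → k = e01K4 ∨ k = edge 0 2 ∨ k = edge 0 3 := by
  decide

lemma eq_of_inc_one : ∀ k, K4m.inc (1 : Fin 4) k → k = e01K4 ∨ k = edge 1 2 ∨ k = edge 1 3 := by
  decide

lemma not_forall_inc_eq : ∀ (v : Fin 4) (f f' : K4m.E), ¬ ∀ e, K4m.inc v e → e = f ∨ e = f' := by
  decide

lemma exists_ends_eq_map : ∀ (π : Equiv.Perm K4m.V) (e : K4m.E),
    ∃ e', K4m.ends e' = Sym2.map π (K4m.ends e) := by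
  decide

lemma exists_perm_ends_eq : ∀ t : K4m.E, ∃ π : Equiv.Perm K4m.V,
    Sym2.map π (K4m.ends t) = K4m.ends e01K4 := by
  decide

noncomputable def permEdges (π : Equiv.Perm K4m.V) : K4m.E ≃ K4m.E :=
  Equiv.ofBijective (fun e => (exists_ends_eq_map π e).choose) <|
    Finite.injective_iff_bijective.1 fun e e' h => ends_injective <|
      Sym2.map.injective π.injective <| by
        rw [← (exists_ends_eq_map π e).choose_spec, ← (exists_ends_eq_map π e').choose_spec]
        exact congrArg K4m.ends h

lemma isIso_permEdges (π : Equiv.Perm K4m.V) : IsIso π (permEdges π) := fun e =>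
  (exists_ends_eq_map π e).choose_spec

lemma not_badSplitSep : ¬ K4m.badSplitSep {e | e ≠ e01K4} := by
  rintro ⟨A, hA⟩
  lift A to Finset K4m.E using Set.toFinite A
  have hS : {e : K4m.E | e ≠ e01K4} = ↑(Finset.univ.filter (· ≠ e01K4)) := by simp
  rw [hS, sepOrder_coe_finset, ← Finset.coe_compl, ← Finset.coe_inter,
    ← Finset.coe_inter, Set.ncard_coe_finset, Set.ncard_coe_finset, Finset.coe_nonempty, Finset.coe_nonempty] at hA
  revert A
  decide

end K4m

namespace Multigraph

open K4m

variable {G : Multigraph} {α : G.V ≃ K4m.V} {β : G.E ≃ K4m.E} {g : G.E} {D C : Set G.E}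

lemma IsIso.exists_isIso_apply_eq_e01K4 (h : IsIso α β) (g : G.E) :
    ∃ (α' : G.V ≃ K4m.V) (β' : G.E ≃ K4m.E), IsIso α' β' ∧ β' g = e01K4 := by
  obtain ⟨π, hπ⟩ := K4m.exists_perm_ends_eq (β g)
  refine ⟨α.trans π, β.trans (K4m.permEdges π), h.trans (K4m.isIso_permEdges π),
    K4m.ends_injective ?_⟩
  rw [Equiv.trans_apply, K4m.isIso_permEdges, hπ]

def k4MinorEdge (hg : β g = e01K4) (hDC : D ∪ C ⊆ {g}) (k : K4m.E)
    (hk : k ≠ e01K4 := by decide) : (G.minorDC D C).E :=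
  ⟨β.symm k, fun hmem => hk (by rw [← hg, ← hDC hmem, β.apply_symm_apply])⟩

lemma eq_k4MinorEdge_iff (hg : β g = e01K4) (hDC : D ∪ C ⊆ {g}) {k : K4m.E} (hk : k ≠ e01K4)
    {x : (G.minorDC D C).E} : x = k4MinorEdge hg hDC k hk ↔ β x.1 = k :=
  Subtype.ext_iff.trans β.eq_symm_apply

lemma nodup_pmap_k4MinorEdge (hg : β g = e01K4) (hDC : D ∪ C ⊆ {g}) {l : List K4m.E}
    (hl : ∀ k ∈ l, k ≠ e01K4) (hnd : l.Nodup) :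
    (l.pmap (fun k hk => k4MinorEdge hg hDC k hk) hl).Nodup :=
  hnd.pmap fun _ _ _ _ h => β.symm.injective (congrArg Subtype.val h)

theorem IsIso.badSplitSep_contract (h : IsIso α β) (hg : β g = e01K4)
    {T : Set (G.minorDC ∅ {g}).E} (hT : Tᶜ.Subsingleton) : (G.minorDC ∅ {g}).badSplitSep T := by
  have hDC : (∅ : Set G.E) ∪ {g} ⊆ {g} := by simp
  have hg' : G.ends g = s(α.symm (0 : Fin 4), α.symm (1 : Fin 4)) := by
    rw [← β.symm_apply_apply g, hg, h.ends_symm_apply]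
    rfl
  have hparallel : ∀ (k₁ k₂ : K4m.E) (hk₁ : k₁ ≠ e01K4) (hk₂ : k₂ ≠ e01K4) (w : K4m.V),
      K4m.ends k₁ = s((0 : Fin 4), w) → K4m.ends k₂ = s((1 : Fin 4), w) →
      (G.minorDC ∅ {g}).sepOrder {k4MinorEdge hg hDC k₁ hk₁, k4MinorEdge hg hDC k₂ hk₂} ≤ 2 :=
    fun k₁ k₂ _ _ w h₁ h₂ => sepOrder_pair_le_two_of_parallel <|
      minorDC_ends_eq_of_triangle (Set.mem_singleton g) hg' (w := α.symm w)
        (by rw [k4MinorEdge, h.ends_symm_apply, h₁]; rfl)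
        (by rw [k4MinorEdge, h.ends_symm_apply, h₂]; rfl)
  exact badSplitSep_of_two_pairs
    (nodup_pmap_k4MinorEdge hg hDC (l := [edge 0 2, edge 1 2, edge 0 3, edge 1 3, edge 2 3])
      (by decide) (by decide))
    (hparallel _ _ _ _ (2 : Fin 4) rfl rfl) (hparallel _ _ _ _ (3 : Fin 4) rfl rfl) hT

theorem IsIso.badSplitSep_delete (h : IsIso α β) (hg : β g = e01K4)
    {T : Set (G.minorDC {g} ∅).E} (hT : Tᶜ.Subsingleton) : (G.minorDC {g} ∅).badSplitSep T := by
  have hDC : ({g} : Set G.E) ∪ ∅ ⊆ {g} := by simp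
  have hseries : ∀ (i : K4m.V) (k₁ k₂ : K4m.E) (hk₁ : k₁ ≠ e01K4) (hk₂ : k₂ ≠ e01K4),
      K4m.inc i k₁ → K4m.inc i k₂ → (∀ k, K4m.inc i k → k = e01K4 ∨ k = k₁ ∨ k = k₂) →
      (G.minorDC {g} ∅).sepOrder {k4MinorEdge hg hDC k₁ hk₁, k4MinorEdge hg hDC k₂ hk₂} ≤ 2 := by
    intro i k₁ k₂ hk₁ hk₂ hi₁ hi₂ hi
    have hinc : ∀ x : (G.minorDC {g} ∅).E,
        (G.minorDC {g} ∅).inc (G.minorVert _ _ (α.symm i)) x ↔ K4m.inc i (β x.1) := fun x => by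
      rw [minorDC_inc_minorVert_iff, ← h.inc_iff, α.apply_symm_apply]
    refine sepOrder_pair_le_two_of_series ((hinc _).2 ?_) ((hinc _).2 ?_) fun x hx => ?_
    · rwa [k4MinorEdge, β.apply_symm_apply]
    · rwa [k4MinorEdge, β.apply_symm_apply]
    · rcases hi _ ((hinc x).1 hx) with h₀ | h₁ | h₂
      · exact (x.2 (Or.inl (β.injective (h₀.trans hg.symm)))).elim
      · exact Or.inl ((eq_k4MinorEdge_iff hg hDC hk₁).2 h₁)
      · exact Or.inr ((eq_k4MinorEdge_iff hg hDC hk₂).2 h₂)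
  exact badSplitSep_of_two_pairs
    (nodup_pmap_k4MinorEdge hg hDC (l := [edge 0 2, edge 0 3, edge 1 2, edge 1 3, edge 2 3])
      (by decide) (by decide))
    (hseries (0 : Fin 4) _ _ _ _ (by decide) (by decide) eq_of_inc_zero)
    (hseries (1 : Fin 4) _ _ _ _ (by decide) (by decide) eq_of_inc_one) hT

end Multigraph

namespace EGraph

open Multigraph

variable {H H' : EGraph}

lemma splits_of_isIso_K4m {α : H.G.V ≃ K4m.V} {β : H.G.E ≃ K4m.E} (h : IsIso α β) {S : Set H.G.E}
    {m : H.G.E} (hm : Sᶜ = {m}) {f : H.G.E} (hf : f ∈ S \ H.Dp ∨ f ∈ S \ H.Cp) :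
    H.Splits S := by
  obtain ⟨α', β', h', hf'⟩ := h.exists_isIso_apply_eq_e01K4 f
  have hT : ∀ {D C : Set H.G.E}, ({e : (H.G.minorDC D C).E | e.1 ∈ S})ᶜ.Subsingleton := by
    intro D C x hx y hy
    have hx' : x.1 ∈ Sᶜ := hx
    have hy' : y.1 ∈ Sᶜ := hy
    rw [hm] at hx' hy'
    exact Subtype.ext (hx'.trans hy'.symm)
  rcases hf with hf | hf
  · exact Or.inr (Or.inl ⟨f, hf, h'.badSplitSep_delete hf' hT⟩)
  · exact Or.inr (Or.inr ⟨f, hf, h'.badSplitSep_contract hf' hT⟩)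

lemma card_E_le_of_minorStep (hstep : MinorStep H H') : Nat.card H'.G.E ≤ Nat.card H.G.E := by
  cases hstep with
  | unprotC | unprotD => exact le_rfl
  | _ => exact Finite.card_subtype_le _

lemma not_nonSplit_of_card_E_le_five (h : Nat.card H.G.E ≤ 5) : ¬ H.NonSplit := by
  rintro ⟨S, hS, hns⟩
  have hle : S.ncard ≤ Nat.card H.G.E := (Set.ncard_le_ncard (Set.subset_univ S)).trans_eq
    (Set.ncard_univ _)
  have hSu : S = Set.univ := Set.eq_of_subset_of_ncard_le (Set.subset_univ S) (by
    rw [Set.ncard_univ]; omega)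
  exact hns (Or.inl (hSu ▸ badSplitSep_univ_of_card_eq_five (by omega)))

lemma card_le_five_or_lt_of_minorStep_K4m {Cp Dp : Set K4m.E}
    (hle : (Cp, Dp) ≤ (K4one.Cp, K4one.Dp)) (hstep : MinorStep ⟨K4m, Cp, Dp⟩ H') :
    Nat.card H'.G.E ≤ 5 ∨
      ∃ Cp' Dp' : Set K4m.E, (Cp', Dp') < (K4one.Cp, K4one.Dp) ∧ H' = ⟨K4m, Cp', Dp'⟩ := by
  have hlt : ∀ (p : K4m.E → Prop) (e : K4m.E), ¬ p e → Nat.card {e // p e} ≤ 5 := fun p e he => by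
    have := Finite.card_subtype_lt he
    rw [K4m.nat_card_E] at this
    omega
  cases hstep with
  | delV v =>
    obtain ⟨e, he⟩ : ∃ e, K4m.inc v e := by
      by_contra! hv
      exact K4m.not_forall_inc_eq v e01K4 e01K4 fun e he => (hv e he).elim
    exact Or.inl (hlt _ e (not_not_intro he))
  | delE f => exact Or.inl (hlt _ f (by simp))
  | conE f => exact Or.inl (hlt _ f (by simp))
  | unprotC f hf =>
    exact Or.inr ⟨Cp \ {f}, Dp, lt_of_lt_of_le (b := (Cp, Dp)) (Prod.lt_iff.2 (Or.inl
      ⟨Set.sdiff_singleton_ssubset.2 (show f ∈ Cp from hf), le_rfl⟩)) hle, rfl⟩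
  | unprotD f hf =>
    exact Or.inr ⟨Cp, Dp \ {f}, lt_of_lt_of_le (b := (Cp, Dp)) (Prod.lt_iff.2 (Or.inr
      ⟨le_rfl, Set.sdiff_singleton_ssubset.2 (show f ∈ Dp from hf)⟩)) hle, rfl⟩
  | parallel f f' hne hpar => exact (hne (K4m.ends_injective hpar)).elim
  | series f f' v _ _ _ hdeg =>
    exact (K4m.not_forall_inc_eq v f f' hdeg).elim

lemma not_nonSplit_of_lt_K4one {Cp Dp : Set K4m.E} (hlt : (Cp, Dp) < (K4one.Cp, K4one.Dp)) :
    ¬ (⟨K4m, Cp, Dp⟩ : EGraph).NonSplit := by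
  rintro ⟨S, hS, hns⟩
  obtain ⟨m, hm⟩ := Set.exists_compl_eq_singleton (S := S) (by rw [hS, K4m.nat_card_E])
  have hmem : ∀ e, e ≠ m → e ∈ S := fun e he => by
    by_contra heS
    exact he (show e ∈ ({m} : Set K4m.E) from hm ▸ heS)
  obtain ⟨f, hf⟩ : ∃ f, f ∈ S \ Dp ∨ f ∈ S \ Cp := by
    by_cases hm01 : m = e01K4
    · obtain ⟨f, hf, hfp⟩ : ∃ f, f ≠ e01K4 ∧ (f ∉ Dp ∨ f ∉ Cp) := by
        rcases Prod.lt_iff.1 hlt with ⟨hC, -⟩ | ⟨-, hD⟩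
        · obtain ⟨f, hf, hfC⟩ := Set.exists_of_ssubset hC
          exact ⟨f, hf, Or.inr hfC⟩
        · obtain ⟨f, hf, hfD⟩ := Set.exists_of_ssubset hD
          exact ⟨f, hf, Or.inl hfD⟩
      exact ⟨f, hfp.imp (fun h => ⟨hmem f (hm01 ▸ hf), h⟩) (fun h => ⟨hmem f (hm01 ▸ hf), h⟩)⟩
    · exact ⟨e01K4, Or.inr ⟨hmem _ (Ne.symm hm01), fun h => hlt.le.1 h rfl⟩⟩
  exact hns (splits_of_isIso_K4m (IsIso.refl K4m) hm hf)

lemma not_splits_K4one : ¬ K4one.Splits {e | e ≠ e01K4} := by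
  rintro (hbad | ⟨f, hf, -⟩ | ⟨f, hf, -⟩)
  exacts [K4m.not_badSplitSep hbad, hf.2 hf.1, hf.2 hf.1]

lemma ncard_K4one_Cp : ({e : K4m.E | e ≠ e01K4}).ncard = 5 := by
  rw [show {e : K4m.E | e ≠ e01K4} = {e01K4}ᶜ from rfl, Set.ncard_compl, K4m.nat_card_E,
    Set.ncard_singleton]

theorem minorMinimalNonSplit_K4one : K4one.MinorMinimalNonSplit := by
  refine ⟨⟨_, ncard_K4one_Cp, not_splits_K4one⟩, fun H' hH' => ?_⟩
  suffices Nat.card H'.G.E ≤ 5 ∨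
      ∃ Cp Dp : Set K4m.E, (Cp, Dp) < (K4one.Cp, K4one.Dp) ∧ H' = ⟨K4m, Cp, Dp⟩ by
    rcases this with h | ⟨Cp, Dp, hlt, rfl⟩
    exacts [not_nonSplit_of_card_E_le_five h, not_nonSplit_of_lt_K4one hlt]
  induction hH' with
  | single h => exact card_le_five_or_lt_of_minorStep_K4m le_rfl h
  | tail _ h ih =>
    rcases ih with h5 | ⟨Cp, Dp, hlt, rfl⟩
    · exact Or.inl ((card_E_le_of_minorStep h).trans h5)
    · exact card_le_five_or_lt_of_minorStep_K4m hlt.le h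

lemma not_splits_unprotC {S : Set H.G.E} {f : H.G.E} (hf : f ∉ S) (hns : ¬ H.Splits S) :
    ¬ (H.unprotC f).Splits S := by
  rintro (hb | hD | ⟨f', ⟨hf'S, hf'C⟩, hb⟩)
  · exact hns (Or.inl hb)
  · exact hns (Or.inr (Or.inl hD))
  · exact hns (Or.inr (Or.inr ⟨f', ⟨hf'S, fun h => hf'C ⟨h, fun e => hf (e ▸ hf'S)⟩⟩, hb⟩))

lemma not_splits_unprotD {S : Set H.G.E} {f : H.G.E} (hf : f ∉ S) (hns : ¬ H.Splits S) :
    ¬ (H.unprotD f).Splits S := by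
  rintro (hb | ⟨f', ⟨hf'S, hf'D⟩, hb⟩ | hC)
  · exact hns (Or.inl hb)
  · exact hns (Or.inr (Or.inl ⟨f', ⟨hf'S, fun h => hf'D ⟨h, fun e => hf (e ▸ hf'S)⟩⟩, hb⟩))
  · exact hns (Or.inr (Or.inr hC))

lemma MinorMinimalNonSplit.Cp_subset (hH : H.MinorMinimalNonSplit) {S : Set H.G.E}
    (hS : S.ncard = 5) (hns : ¬ H.Splits S) : H.Cp ⊆ S := fun f hf => by_contra fun hfS =>
  hH.2 _ (.single (.unprotC H f hf)) ⟨S, hS, not_splits_unprotC hfS hns⟩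

lemma MinorMinimalNonSplit.Dp_subset (hH : H.MinorMinimalNonSplit) {S : Set H.G.E}
    (hS : S.ncard = 5) (hns : ¬ H.Splits S) : H.Dp ⊆ S := fun f hf => by_contra fun hfS =>
  hH.2 _ (.single (.unprotD H f hf)) ⟨S, hS, not_splits_unprotD hfS hns⟩

theorem MinorMinimalNonSplit.isoTo_K4one (hH : H.MinorMinimalNonSplit) (hG : H.G.IsoTo K4m) :
    H.IsoTo K4one := by
  obtain ⟨α, β, h⟩ := hG
  obtain ⟨S, hS, hns⟩ := hH.1
  obtain ⟨m, hm⟩ := Set.exists_compl_eq_singleton (S := S)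
    (by rw [hS, Nat.card_congr β, K4m.nat_card_E])
  have hC : H.Cp = S := (hH.Cp_subset hS hns).antisymm fun f hfS =>
    by_contra fun hf => hns (splits_of_isIso_K4m h hm (Or.inr ⟨hfS, hf⟩))
  have hD : H.Dp = S := (hH.Dp_subset hS hns).antisymm fun f hfS =>
    by_contra fun hf => hns (splits_of_isIso_K4m h hm (Or.inl ⟨hfS, hf⟩))
  obtain ⟨α', β', h', hm'⟩ := IsIso.exists_isIso_apply_eq_e01K4 h m
  have hmem : ∀ e, β' e ≠ e01K4 ↔ e ∈ S := fun e => by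
    rw [← hm', β'.injective.ne_iff, ← Set.notMem_compl_iff, hm, Set.mem_singleton_iff]
  exact ⟨α', β', h', fun e => hC ▸ hmem e, fun e => hD ▸ hmem e⟩

end EGraph

theorem stmt17 :
    K4one.MinorMinimalNonSplit ∧
    ({e : K4m.E | e ≠ e01K4}).ncard = 5 ∧
    ¬ K4one.Splits {e : K4m.E | e ≠ e01K4} ∧
    ∀ H : EGraph, H.G.IsoTo K4m → H.MinorMinimalNonSplit → H.IsoTo K4one :=
  ⟨EGraph.minorMinimalNonSplit_K4one, EGraph.ncard_K4one_Cp, EGraph.not_splits_K4one,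
    fun _ hG hH => hH.isoTo_K4one hG⟩
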